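/- For every positive integer n there exists a set S of permutations of [n] = {1,…,n} such that any two distinct permutations in S are locally disjoint and 5^n · |S| ≥ n!. -/

import Mathlib

/-!
Left multiplication preserves local disjointness, so every permutation fails to be locally
disjoint from exactly as many permutations as the identity does. A permutation `ρ` that is not
locally disjoint from the identity has no two crossing arcs `i ↦ ρ i` going right and no two
crossing arcs going left. Non-crossing arcs are matched like parentheses, so `ρ` is determined
by the relative positions of `ρ t` and `ρ⁻¹ t` to `t`, which take one of 5 values for each `t`.
Hence each permutation conflicts with at most `5 ^ n` permutations, and a greedy choice yields a
pairwise locally disjoint set of size at least `n! / 5 ^ n`.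
-/

/-- Two permutations `σ` and `τ` of `[n]` are *locally disjoint* if there exist
distinct elements `a, b` with `σ⁻¹(a) < σ⁻¹(b) < τ⁻¹(a) < τ⁻¹(b)` or
`τ⁻¹(a) < τ⁻¹(b) < σ⁻¹(a) < σ⁻¹(b)`. -/
def LocallyDisjoint {n : ℕ} (σ τ : Equiv.Perm (Fin n)) : Prop :=
  ∃ a b : Fin n, a ≠ b ∧
    ((σ⁻¹ a < σ⁻¹ b ∧ σ⁻¹ b < τ⁻¹ a ∧ τ⁻¹ a < τ⁻¹ b) ∨
     (τ⁻¹ a < τ⁻¹ b ∧ τ⁻¹ b < σ⁻¹ a ∧ σ⁻¹ a < σ⁻¹ b))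

open Finset

theorem Finset.exists_pairwise_subset_card_le_mul {α : Type*} [DecidableEq α]
    (r : α → α → Prop) [DecidableRel r] [Std.Symm r] [Std.Irrefl r] (d : ℕ) (V : Finset α)
    (hd : ∀ a ∈ V, #{b ∈ V | ¬ r a b} ≤ d) :
    ∃ S ⊆ V, (S : Set α).Pairwise r ∧ #V ≤ d * #S := by
  induction V using Finset.strongInduction with
  | _ V ih =>
    obtain rfl | ⟨a, ha⟩ := V.eq_empty_or_nonempty
    · exact ⟨∅, by simp⟩
    set W := {b ∈ V | r a b}
    have haW : a ∉ W := fun h => irrefl a (mem_filter.1 h).2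
    have hWV : W ⊂ V := filter_ssubset.2 ⟨a, ha, irrefl a⟩
    obtain ⟨S, hSW, hS, hcard⟩ := ih W hWV fun b hb =>
      (card_le_card (filter_subset_filter _ (filter_subset _ _))).trans (hd b (hWV.subset hb))
    refine ⟨insert a S, insert_subset ha (hSW.trans hWV.subset), ?_, ?_⟩
    · rw [coe_insert, Set.pairwise_insert_of_symm]
      exact ⟨hS, fun b hb _ => (mem_filter.1 (hSW hb)).2⟩
    · have hsplit : #W + #{b ∈ V | ¬ r a b} = #V := card_filter_add_card_filter_not _
      rw [card_insert_of_notMem fun h => haW (hSW h), mul_add, mul_one]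
      have := hd a ha
      omega

namespace Equiv.Perm

variable {α : Type*} [LinearOrder α]

def NoncrossingExcedances (ρ : Equiv.Perm α) : Prop :=
  ∀ i j : α, ¬ (i < j ∧ j < ρ i ∧ ρ i < ρ j)

theorem not_apply_lt_apply_of_noncrossingExcedances {ρ ρ' : Equiv.Perm α}
    (hρ' : ρ'.NoncrossingExcedances) (hexc : ∀ t, t < ρ' t → t < ρ t)
    (hinv : ∀ t, ρ⁻¹ t < t → ρ'⁻¹ t < t) {o : α} (ho : o < ρ o)
    (ih : ∀ p, o < p → p < ρ p → ρ p = ρ' p) : ¬ ρ o < ρ' o := by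
  intro hlt
  -- The `ρ'`-arc `p ↦ ρ o` cannot start left of `o`, since it would cross the `ρ'`-arc from `o`.
  set p := ρ'⁻¹ (ρ o)
  have hρ'p : ρ' p = ρ o := ρ'.apply_symm_apply _
  have hp : p < ρ' p := hρ'p ▸ hinv _ (by simpa using ho)
  have hpo : p ≠ o := fun h => hlt.ne (h ▸ hρ'p).symm
  have hop : o < p := (lt_or_gt_of_ne hpo).resolve_left fun hpo =>
    hρ' p o ⟨hpo, hρ'p ▸ ho, hρ'p ▸ hlt⟩
  exact hpo (ρ.injective ((ih p hop (hexc p hp)).trans hρ'p))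

theorem apply_eq_of_lt_apply_of_noncrossingExcedances [Finite α] {ρ ρ' : Equiv.Perm α}
    (hρ : ρ.NoncrossingExcedances) (hρ' : ρ'.NoncrossingExcedances)
    (hexc : ∀ t, t < ρ t ↔ t < ρ' t) (hinv : ∀ t, ρ⁻¹ t < t ↔ ρ'⁻¹ t < t) :
    ∀ o, o < ρ o → ρ o = ρ' o := by
  intro o
  induction o using WellFoundedGT.induction with
  | _ o ih =>
    intro ho
    refine le_antisymm (not_lt.1 ?_) (not_lt.1 ?_)
    · exact not_apply_lt_apply_of_noncrossingExcedances hρ (fun t => (hexc t).1)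
        (fun t => (hinv t).2) ((hexc o).1 ho) fun p hop hp => (ih p hop ((hexc p).2 hp)).symm
    · exact not_apply_lt_apply_of_noncrossingExcedances hρ' (fun t => (hexc t).2)
        (fun t => (hinv t).1) ho fun p hop hp => ih p hop hp

/-- Over `αᵒᵈ`, `NoncrossingExcedances ρ` says that the arcs `i ↦ ρ i` with `ρ i < i` do not
cross. -/
theorem eq_of_compare_eq_of_noncrossingExcedances [Finite α] {ρ ρ' : Equiv.Perm α}
    (hρ : ρ.NoncrossingExcedances) (hρd : NoncrossingExcedances (α := αᵒᵈ) ρ)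
    (hρ' : ρ'.NoncrossingExcedances) (hρ'd : NoncrossingExcedances (α := αᵒᵈ) ρ')
    (h : ∀ t, compare (ρ t) t = compare (ρ' t) t)
    (hinv : ∀ t, compare (ρ⁻¹ t) t = compare (ρ'⁻¹ t) t) : ρ = ρ' := by
  have lt_iff {a b c d : α} (h : compare a b = compare c d) : a < b ↔ c < d := by
    rw [← compare_lt_iff_lt, h, compare_lt_iff_lt]
  have gt_iff {a b c d : α} (h : compare a b = compare c d) : b < a ↔ d < c := by
    rw [← compare_gt_iff_gt, h, compare_gt_iff_gt]
  ext t
  rcases lt_trichotomy (ρ t) t with ht | ht | ht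
  · exact apply_eq_of_lt_apply_of_noncrossingExcedances (α := αᵒᵈ) hρd hρ'd
      (fun t => lt_iff (h t)) (fun t => gt_iff (hinv t)) t ht
  · exact ht.trans (compare_eq_iff_eq.1 ((h t).symm.trans (compare_eq_iff_eq.2 ht))).symm
  · exact apply_eq_of_lt_apply_of_noncrossingExcedances hρ hρ'
      (fun t => gt_iff (h t)) (fun t => lt_iff (hinv t)) t ht

theorem card_le_of_noncrossingExcedances [Fintype α] (s : Finset (Equiv.Perm α))
    (hs : ∀ ρ ∈ s, ρ.NoncrossingExcedances ∧ NoncrossingExcedances (α := αᵒᵈ) ρ) :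
    #s ≤ 5 ^ Fintype.card α := by
  let T : Finset (Ordering × Ordering) := {x | x.1 = .eq ↔ x.2 = .eq}
  calc #s ≤ #(Fintype.piFinset fun _ : α => T) := by
        refine card_le_card_of_injOn (fun ρ t => (compare (ρ t) t, compare (ρ⁻¹ t) t))
          (fun ρ _ => Fintype.mem_piFinset.2 fun t => ?_) fun ρ hρ ρ' hρ' heq => ?_
        · simp only [T, mem_filter, mem_univ, true_and, compare_eq_iff_eq]
          rw [Perm.inv_eq_iff_eq, eq_comm]
        · obtain ⟨hρ, hρd⟩ := hs ρ hρ
          obtain ⟨hρ', hρ'd⟩ := hs ρ' hρ'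
          exact eq_of_compare_eq_of_noncrossingExcedances hρ hρd hρ' hρ'd
            (fun t => congrArg Prod.fst (congrFun heq t))
            (fun t => congrArg Prod.snd (congrFun heq t))
    _ = 5 ^ Fintype.card α := by
      rw [Fintype.card_piFinset, prod_const, card_univ]
      rfl

end Equiv.Perm

section LocallyDisjoint

variable {n : ℕ}

instance : DecidableRel (LocallyDisjoint (n := n)) := fun σ τ => by
  unfold LocallyDisjoint; infer_instance

instance : Std.Symm (LocallyDisjoint (n := n)) where
  symm _ _ := fun ⟨a, b, hab, h⟩ => ⟨a, b, hab, h.symm⟩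

instance : Std.Irrefl (LocallyDisjoint (n := n)) where
  irrefl _ := by rintro ⟨_, _, _, ⟨h₁, h₂, -⟩ | ⟨h₁, h₂, -⟩⟩ <;> exact lt_asymm h₁ h₂

theorem LocallyDisjoint.mul_left {σ τ : Equiv.Perm (Fin n)} (π : Equiv.Perm (Fin n))
    (h : LocallyDisjoint σ τ) : LocallyDisjoint (π * σ) (π * τ) := by
  obtain ⟨a, b, hab, h⟩ := h
  exact ⟨π a, π b, π.injective.ne hab, by simpa [mul_inv_rev, Equiv.Perm.mul_apply] using h⟩

theorem noncrossingExcedances_of_not_locallyDisjoint_one {ρ : Equiv.Perm (Fin n)}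
    (h : ¬ LocallyDisjoint 1 ρ) :
    ρ.NoncrossingExcedances ∧ Equiv.Perm.NoncrossingExcedances (α := (Fin n)ᵒᵈ) ρ := by
  constructor
  · rintro i j ⟨hij, hj, hρ⟩
    exact h ⟨ρ i, ρ j, ρ.injective.ne hij.ne, Or.inr (by simpa using ⟨hij, hj, hρ⟩)⟩
  · intro (i : Fin n) (j : Fin n) hpat
    obtain ⟨hji, hj, hρ⟩ : j < i ∧ ρ i < j ∧ ρ j < ρ i := hpat
    exact h ⟨ρ j, ρ i, ρ.injective.ne hji.ne, Or.inl (by simpa using ⟨hρ, hj, hji⟩)⟩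

theorem card_not_locallyDisjoint_le (σ : Equiv.Perm (Fin n)) :
    #{τ | ¬ LocallyDisjoint σ τ} ≤ 5 ^ n := by
  calc #{τ | ¬ LocallyDisjoint σ τ}
      = #(({τ | ¬ LocallyDisjoint σ τ} : Finset _).image (σ⁻¹ * ·)) :=
        (card_image_of_injective _ (mul_right_injective σ⁻¹)).symm
    _ ≤ 5 ^ Fintype.card (Fin n) := by
        refine Equiv.Perm.card_le_of_noncrossingExcedances _ fun ρ hρ => ?_
        obtain ⟨τ, hτ, rfl⟩ := mem_image.1 hρ
        refine noncrossingExcedances_of_not_locallyDisjoint_one fun hld => (mem_filter.1 hτ).2 ?_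
        simpa using hld.mul_left σ
    _ = 5 ^ n := by rw [Fintype.card_fin]

end LocallyDisjoint

theorem exists_pairwise_locallyDisjoint_general (n : ℕ) :
    ∃ S : Finset (Equiv.Perm (Fin n)),
      (∀ σ ∈ S, ∀ τ ∈ S, σ ≠ τ → LocallyDisjoint σ τ) ∧
      Nat.factorial n ≤ 5 ^ n * S.card := by
  obtain ⟨S, -, hS, hcard⟩ := exists_pairwise_subset_card_le_mul LocallyDisjoint (5 ^ n) univ
    fun σ _ => card_not_locallyDisjoint_le σ
  refine ⟨S, hS, ?_⟩
  rwa [card_univ, Fintype.card_perm, Fintype.card_fin] at hcard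

/-- There is a set of pairwise locally disjoint permutations of `[n]` of size at
least `n! / 5 ^ n`. -/
theorem exists_pairwise_locallyDisjoint (n : ℕ) (hn : 0 < n) :
    ∃ S : Finset (Equiv.Perm (Fin n)),
      (∀ σ ∈ S, ∀ τ ∈ S, σ ≠ τ → LocallyDisjoint σ τ) ∧
      Nat.factorial n ≤ 5 ^ n * S.card :=
  exists_pairwise_locallyDisjoint_general n
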